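/- Let f : ℝ³×ℝ³ → ℝ be nonnegative, integrable, with |v|²f integrable and f nonzero. Then its Poisson field φ_f(x) = -(1/(4π))∫ ρ_f(y)/|x-y| dy, where ρ_f(x)=∫f(x,v)dv, satisfies: there exists C_f > 0 such that for all x ∈ ℝ³, φ_f(x) ≤ -C_f/(1+|x|). -/

import Mathlib

open MeasureTheory Real

noncomputable section

abbrev R3 := EuclideanSpace ℝ (Fin 3)

/-- Spatial density `ρ_f(x) = ∫ f(x,v) dv`. -/
def rho (f : R3 × R3 → ℝ) (x : R3) : ℝ := ∫ v, f (x, v)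

/-- Poisson field `φ_f(x) = -(1/(4π)) ∫ ρ_f(y)/|x-y| dy`. -/
def phiF (f : R3 × R3 → ℝ) (x : R3) : ℝ :=
  -(1 / (4 * π)) * ∫ y, rho f y / ‖x - y‖

/-- Membership in the energy space `E`. -/
def memE (f : R3 × R3 → ℝ) : Prop :=
  (∀ p, 0 ≤ f p) ∧ Integrable f ∧ MemLp f ⊤ volume ∧
    Integrable (fun p : R3 × R3 => ‖p.2‖ ^ 2 * f p)

/-!
Some ball `B_R`, `R ≥ 1`, carries positive mass `m` of `ρ_f`, and for `y ∈ B_R` we have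
`|x - y| ≤ |x| + R ≤ R (1 + |x|)`, so `-φ_f(x) ≥ m / (4π R (1 + |x|))`.

The real content is that `y ↦ ρ_f(y) / |x - y|` is integrable, without which `φ_f` would be a
junk value. Split `f(y,v) / |x - y|` according to whether `|x - y| < (1 + |v|)⁻²`. Inside, bound
`f` by `‖f‖_∞`: the Newton kernel over a ball of radius `r` in `ℝ³` has integral `c r²`, and
`(1 + |v|)⁻⁴` is integrable in `v ∈ ℝ³`. Outside, `f / |x - y| ≤ (1 + |v|)² f ≤ 2 (1 + |v|²) f`,
which is integrable by the kinetic energy bound.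
-/

open Metric Set Filter Module

theorem setIntegral_closedBall_div_le_integral_div_norm_sub {E : Type*} [NormedAddCommGroup E]
    [MeasurableSpace E] [OpensMeasurableSpace E] {μ : Measure E} [NullSingletonClass μ] {ρ : E → ℝ}
    (hρ : 0 ≤ ρ) (x : E) (hint : Integrable (fun y => ρ y / ‖x - y‖) μ) {R : ℝ} (hR : 0 ≤ R) :
    (∫ y in closedBall 0 R, ρ y ∂μ) / (‖x‖ + R) ≤ ∫ y, ρ y / ‖x - y‖ ∂μ := by
  rw [← integral_div]
  refine (integral_mono_of_nonneg ?_ hint.restrict ?_).trans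
    (setIntegral_le_integral hint (.of_forall fun y => div_nonneg (hρ y) (norm_nonneg _)))
  · exact .of_forall fun y => div_nonneg (hρ y) (by positivity)
  · filter_upwards [ae_restrict_mem measurableSet_closedBall, ae_restrict_of_ae (μ.ae_ne x)]
      with y hy hyx
    have hdist : ‖x - y‖ ≤ ‖x‖ + R := (norm_sub_le x y).trans (by simpa using hy)
    exact div_le_div_of_nonneg_left (hρ y) (norm_sub_pos_iff.2 hyx.symm) hdist

section NewtonKernel

variable {E : Type*} [NormedAddCommGroup E] [NormedSpace ℝ E] [FiniteDimensional ℝ E]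
  [MeasurableSpace E] [BorelSpace E] {μ : Measure E} [μ.IsAddHaarMeasure]

theorem integrable_indicator_ball_inv_norm (hd : 1 < finrank ℝ E) (r : ℝ) :
    Integrable ((ball (0 : E) r).indicator fun z => ‖z‖⁻¹) μ := by
  refine (integrable_indicator_iff measurableSet_ball).2 <|
    integrableOn_ball_of_norm_le_rpow (C := 1) (α := 1) hd.le (by exact_mod_cast hd)
      (.of_forall fun z => ?_) (by fun_prop)
  simp [Real.rpow_neg_one]

theorem integral_indicator_ball_inv_norm (hd : 1 ≤ finrank ℝ E) {r : ℝ} (hr : 0 < r) :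
    ∫ z, (ball (0 : E) r).indicator (fun z => ‖z‖⁻¹) z ∂μ =
      r ^ (finrank ℝ E - 1) * ∫ z, (ball (0 : E) 1).indicator (fun z => ‖z‖⁻¹) z ∂μ := by
  have hscale : ∀ z : E, (ball (0 : E) r).indicator (fun z => ‖z‖⁻¹) (r • z) =
      r⁻¹ * (ball (0 : E) 1).indicator (fun z => ‖z‖⁻¹) z := by
    intro z
    have hmem : r • z ∈ ball (0 : E) r ↔ z ∈ ball (0 : E) 1 := by
      simp [norm_smul, abs_of_pos hr, mul_lt_iff_lt_one_right hr]
    by_cases hz : z ∈ ball (0 : E) 1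
    · simp [hz, hmem.2 hz, norm_smul, abs_of_pos hr, mul_comm]
    · simp [hz, mt hmem.1 hz]
  have h := Measure.integral_comp_smul_of_nonneg μ
    ((ball (0 : E) r).indicator fun z => ‖z‖⁻¹) r (hR := hr.le)
  simp only [hscale, integral_const_mul, smul_eq_mul] at h
  rw [pow_sub₀ r hr.ne' hd, pow_one]
  field_simp at h ⊢
  linarith

theorem integrable_indicator_ball_inv_norm_sub_prod {V : Type*} [MeasurableSpace V]
    {ν : Measure V} [SFinite ν] (hd : 1 < finrank ℝ E) (x : E) {r : V → ℝ} (hr : Measurable r)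
    (hr_pos : ∀ v, 0 < r v) (hr_int : Integrable (fun v => r v ^ (finrank ℝ E - 1)) ν) :
    Integrable (fun p : E × V => (ball (0 : E) (r p.2)).indicator (fun z => ‖z‖⁻¹) (x - p.1))
      (μ.prod ν) := by
  have hmeas : Measurable fun p : E × V =>
      (ball (0 : E) (r p.2)).indicator (fun z => ‖z‖⁻¹) (x - p.1) := by
    classical
    simp only [indicator_apply, mem_ball_zero_iff]
    exact Measurable.ite (measurableSet_lt (by fun_prop) (by fun_prop)) (by fun_prop)
      measurable_const
  refine (integrable_prod_iff' hmeas.aestronglyMeasurable).2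
    ⟨.of_forall fun v => (integrable_indicator_ball_inv_norm hd (r v)).comp_sub_left x, ?_⟩
  refine (hr_int.mul_const (∫ z, (ball (0 : E) 1).indicator (fun z => ‖z‖⁻¹) z ∂μ)).congr
    (.of_forall fun v => ?_)
  have hnorm : ∀ z, ‖(ball (0 : E) (r v)).indicator (fun z => ‖z‖⁻¹) z‖ =
      (ball (0 : E) (r v)).indicator (fun z => ‖z‖⁻¹) z := fun z =>
    norm_of_nonneg (indicator_nonneg (fun _ _ => inv_nonneg.2 (norm_nonneg _)) z)
  simp only [hnorm]
  rw [integral_sub_left_eq_self _ μ x, integral_indicator_ball_inv_norm hd.le (hr_pos v)]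

end NewtonKernel

theorem rho_nonneg {f : R3 × R3 → ℝ} (hf : 0 ≤ f) : 0 ≤ rho f := fun _ =>
  integral_nonneg fun _ => hf _

theorem integrable_rho {f : R3 × R3 → ℝ} (hf : Integrable f) : Integrable (rho f) := by
  rw [Measure.volume_eq_prod] at hf
  exact hf.integral_prod_left

theorem integral_rho {f : R3 × R3 → ℝ} (hf : Integrable f) : ∫ y, rho f y = ∫ p, f p := by
  rw [Measure.volume_eq_prod] at hf ⊢
  exact integral_integral hf

theorem integrable_div_norm_sub_fst {f : R3 × R3 → ℝ} (hf : memE f) (x : R3) :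
    Integrable (fun p : R3 × R3 => f p / ‖x - p.1‖) := by
  obtain ⟨hf_nonneg, hf_int, hf_bdd, hf_kin⟩ := hf
  set r : R3 → ℝ := fun v => ((1 + ‖v‖) ^ 2)⁻¹ with hr_def
  have hr_int : Integrable (fun v => r v ^ (finrank ℝ R3 - 1)) := by
    refine (integrable_one_add_norm (E := R3) (μ := volume) (r := 4) (by simp; norm_num)).congr
      (.of_forall fun v => ?_)
    have hv : (0 : ℝ) < 1 + ‖v‖ := by positivity
    simp only [hr_def, finrank_euclideanSpace_fin, Real.rpow_neg hv.le]
    norm_num [← pow_mul]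
  have hk := integrable_indicator_ball_inv_norm_sub_prod (μ := volume) (ν := volume)
    (by simp) x (r := r) (by fun_prop) (fun v => by positivity) hr_int
  rw [← Measure.volume_eq_prod] at hk
  refine ((hk.const_mul (lpNorm f ⊤ volume)).add ((hf_int.add hf_kin).const_mul 2)).mono'
    (hf_int.aemeasurable.div (by fun_prop)).aestronglyMeasurable ?_
  filter_upwards [ae_le_lpNorm_exponent_top hf_bdd] with p hp
  have ha := hf_nonneg p
  rw [Real.norm_of_nonneg ha] at hp
  simp only [Pi.add_apply, norm_div, norm_norm, Real.norm_of_nonneg ha]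
  by_cases hball : x - p.1 ∈ ball (0 : R3) (r p.2)
  · rw [indicator_of_mem hball, div_eq_mul_inv]
    have := mul_le_mul_of_nonneg_right hp (inv_nonneg.2 (norm_nonneg (x - p.1)))
    nlinarith [norm_nonneg p.2]
  · rw [indicator_of_notMem hball, mul_zero, zero_add]
    have hrt : r p.2 ≤ ‖x - p.1‖ := by simpa using hball
    calc f p / ‖x - p.1‖ ≤ f p / r p.2 := div_le_div_of_nonneg_left ha (by positivity) hrt
      _ = f p * (1 + ‖p.2‖) ^ 2 := by simp [hr_def]
      _ ≤ 2 * (f p + ‖p.2‖ ^ 2 * f p) := by nlinarith [mul_nonneg ha (sq_nonneg (1 - ‖p.2‖))]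

theorem integrable_rho_div_norm_sub {f : R3 × R3 → ℝ} (hf : memE f) (x : R3) :
    Integrable (fun y => rho f y / ‖x - y‖) := by
  have h := integrable_div_norm_sub_fst hf x
  rw [Measure.volume_eq_prod] at h
  simpa only [rho, integral_div] using h.integral_prod_left

theorem poisson_field_upper_bound (f : R3 × R3 → ℝ) (hf : memE f)
    (hne : ¬ (f =ᵐ[volume] 0)) :
    ∃ C : ℝ, 0 < C ∧ ∀ x : R3, phiF f x ≤ -C / (1 + ‖x‖) := by
  have hf_nonneg : 0 ≤ f := hf.1
  have hf_int : Integrable f := hf.2.1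
  have hmass : 0 < ∫ y, rho f y := by
    rw [integral_rho hf_int]
    exact (integral_nonneg hf_nonneg).lt_of_ne fun h =>
      hne ((integral_eq_zero_iff_of_nonneg hf_nonneg hf_int).1 h.symm)
  obtain ⟨R, hm, hR⟩ : ∃ R : ℝ, 0 < ∫ y in closedBall 0 R, rho f y ∧ 1 ≤ R :=
    ((((aecover_closedBall tendsto_id).integral_tendsto_of_countably_generated
      (integrable_rho hf_int)).eventually (eventually_gt_nhds hmass)).and
      (eventually_ge_atTop 1)).exists
  set m := ∫ y in closedBall 0 R, rho f y
  refine ⟨m / (4 * π * R), by positivity, fun x => ?_⟩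
  have hlower := setIntegral_closedBall_div_le_integral_div_norm_sub (rho_nonneg hf_nonneg) x
    (integrable_rho_div_norm_sub hf x) (by linarith : 0 ≤ R)
  have hxR : ‖x‖ + R ≤ R * (1 + ‖x‖) := by nlinarith [norm_nonneg x]
  calc phiF f x = -(1 / (4 * π)) * ∫ y, rho f y / ‖x - y‖ := rfl
    _ ≤ -(1 / (4 * π)) * (m / (‖x‖ + R)) :=
      mul_le_mul_of_nonpos_left hlower (by simp [pi_pos.le])
    _ = -(m / (4 * π * (‖x‖ + R))) := by field_simp
    _ ≤ -(m / (4 * π * (R * (1 + ‖x‖)))) := by gcongr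
    _ = -(m / (4 * π * R)) / (1 + ‖x‖) := by field_simp
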